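/- arXiv:1205.6210 — 3 statements merged into one kernel-verified Lean document; each statement's English description precedes it below -/
import Mathlib

section
/- For a dictionary D ∈ ℝ^{D×L} with unit ℓ2-norm columns and L ≥ D, the self-coherence μ(D) = max_{d≠e} |⟨d_d, d_e⟩| satisfies μ(D) ≥ √((L−D)/(D(L−1))) (the Welch bound). -/
/-- Inner product of columns `d` and `e` of a matrix. -/
def colInner {D L : ℕ} (A : Matrix (Fin D) (Fin L) ℝ) (d e : Fin L) : ℝ :=
  ∑ i, A i d * A i e

/-- Self-coherence: maximal absolute inner product between distinct columns. -/
noncomputable def selfCoherence {D L : ℕ} (A : Matrix (Fin D) (Fin L) ℝ) : ℝ :=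
  sSup {x | ∃ d e : Fin L, d ≠ e ∧ x = |colInner A d e|}

/-- The Welch bound on the self-coherence of a unit-norm dictionary. -/
theorem welch_bound (D L : ℕ) (hD : 1 ≤ D) (hLD : D ≤ L)
    (A : Matrix (Fin D) (Fin L) ℝ)
    (hunit : ∀ j : Fin L, ∑ i, (A i j) ^ 2 = 1) :
    Real.sqrt (((L : ℝ) - D) / (D * ((L : ℝ) - 1))) ≤ selfCoherence A := by
  rcases le_or_gt L 1 with hL1 | hL1
  · -- L = 1, so D = 1
    have hL : L = 1 := le_antisymm hL1 (hD.trans hLD)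
    have hDL : D = 1 := le_antisymm (by omega) hD
    subst hL hDL
    have hset : {x | ∃ d e : Fin 1, d ≠ e ∧ x = |colInner A d e|} = ∅ := by
      ext x
      simp only [Set.mem_setOf_eq, Set.mem_empty_iff_false, iff_false, not_exists]
      intro d e
      simp [Subsingleton.elim d e]
    simp [selfCoherence, hset, Real.sSup_empty]
  · -- L ≥ 2
    have hL2 : 2 ≤ L := hL1
    set s : Finset (Fin L × Fin L) := (Finset.univ : Finset (Fin L)).offDiag with hs
    have hsne : s.Nonempty := by
      refine ⟨(⟨0, by omega⟩, ⟨1, by omega⟩), ?_⟩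
      simp [hs, Finset.mem_offDiag, Fin.ext_iff]
    set M : ℝ := s.sup' hsne (fun p => |colInner A p.1 p.2|) with hM
    have hMmem : ∃ d e : Fin L, d ≠ e ∧ M = |colInner A d e| := by
      obtain ⟨p, hp, hpe⟩ := Finset.exists_mem_eq_sup' hsne (fun p => |colInner A p.1 p.2|)
      exact ⟨p.1, p.2, (Finset.mem_offDiag.1 hp).2.2, hpe⟩
    have hMle : ∀ x ∈ {x | ∃ d e : Fin L, d ≠ e ∧ x = |colInner A d e|}, x ≤ M := by
      rintro x ⟨d, e, hde, rfl⟩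
      have hmem : (d, e) ∈ s := Finset.mem_offDiag.2 ⟨Finset.mem_univ _, Finset.mem_univ _, hde⟩
      exact Finset.le_sup' (f := fun p => |colInner A p.1 p.2|) hmem
    have hMsup : M ≤ selfCoherence A := by
      obtain ⟨d, e, hde, hMe⟩ := hMmem
      exact le_csSup ⟨M, hMle⟩ ⟨d, e, hde, hMe⟩
    have hM0 : (0:ℝ) ≤ M := by
      obtain ⟨d, e, hde, hMe⟩ := hMmem; rw [hMe]; positivity
    set B : Fin D → Fin D → ℝ := fun i k => ∑ j, A i j * A k j with hB
    have key1 : (∑ d, ∑ e, (colInner A d e)^2) = ∑ i, ∑ k, (B i k)^2 := by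
      calc (∑ d, ∑ e, (colInner A d e)^2)
          = ∑ p : Fin L × Fin L, (colInner A p.1 p.2)^2 :=
            (Fintype.sum_prod_type (fun p : Fin L × Fin L => (colInner A p.1 p.2)^2)).symm
        _ = ∑ p : Fin L × Fin L, ∑ q : Fin D × Fin D,
              A q.1 p.1 * A q.1 p.2 * (A q.2 p.1 * A q.2 p.2) := by
            refine Finset.sum_congr rfl fun p _ => ?_
            rw [colInner, sq, Finset.sum_mul_sum]
            exact (Fintype.sum_prod_type
              (fun q : Fin D × Fin D => A q.1 p.1 * A q.1 p.2 * (A q.2 p.1 * A q.2 p.2))).symm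
        _ = ∑ q : Fin D × Fin D, ∑ p : Fin L × Fin L,
              A q.1 p.1 * A q.1 p.2 * (A q.2 p.1 * A q.2 p.2) := Finset.sum_comm
        _ = ∑ q : Fin D × Fin D, (B q.1 q.2)^2 := by
            refine Finset.sum_congr rfl fun q _ => ?_
            rw [hB, sq, Finset.sum_mul_sum]
            rw [show (∑ p : Fin L × Fin L, A q.1 p.1 * A q.1 p.2 * (A q.2 p.1 * A q.2 p.2))
                = ∑ i : Fin L, ∑ j : Fin L, A q.1 i * A q.1 j * (A q.2 i * A q.2 j) from
              Fintype.sum_prod_type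
                (fun p : Fin L × Fin L => A q.1 p.1 * A q.1 p.2 * (A q.2 p.1 * A q.2 p.2))]
            refine Finset.sum_congr rfl fun i _ => Finset.sum_congr rfl fun j _ => by ring
        _ = ∑ i, ∑ k, (B i k)^2 := Fintype.sum_prod_type (fun q : Fin D × Fin D => (B q.1 q.2)^2)
    -- trace of B is L
    have htrB : ∑ i, B i i = (L : ℝ) := by
      calc ∑ i, B i i = ∑ i, ∑ j, (A i j)^2 := by
            refine Finset.sum_congr rfl fun i _ => Finset.sum_congr rfl fun j _ => (sq (A i j)).symm
        _ = ∑ j : Fin L, ∑ i : Fin D, (A i j)^2 := Finset.sum_comm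
        _ = ∑ _j : Fin L, (1:ℝ) := Finset.sum_congr rfl fun j _ => hunit j
        _ = L := by simp
    -- Cauchy-Schwarz: L^2 ≤ D * ∑ (B i i)^2
    have hCS : (L:ℝ)^2 ≤ D * ∑ i, (B i i)^2 := by
      have := sq_sum_le_card_mul_sum_sq (s := (Finset.univ : Finset (Fin D)))
        (f := fun i => B i i)
      rw [htrB] at this
      simpa using this
    have hdiagB : ∑ i, (B i i)^2 ≤ ∑ i, ∑ k, (B i k)^2 := by
      refine Finset.sum_le_sum fun i _ => ?_
      exact Finset.single_le_sum (f := fun k => (B i k)^2) (fun k _ => sq_nonneg _)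
        (Finset.mem_univ i)
    -- split total into diagonal and off-diagonal
    have hsplit : (∑ d, ∑ e, (colInner A d e)^2)
        = (L : ℝ) + ∑ p ∈ s, (colInner A p.1 p.2)^2 := by
      have h1 : (∑ d, ∑ e, (colInner A d e)^2)
          = ∑ p ∈ (Finset.univ ×ˢ Finset.univ : Finset (Fin L × Fin L)),
              (colInner A p.1 p.2)^2 := by
        rw [Finset.sum_product]
      rw [h1, ← Finset.diag_union_offDiag (Finset.univ : Finset (Fin L)),
        Finset.sum_union (Finset.disjoint_diag_offDiag _), Finset.sum_diag]
      congr 1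
      have hdd : ∀ d : Fin L, (colInner A d d)^2 = 1 := by
        intro d
        have : colInner A d d = 1 := by
          rw [colInner]
          rw [← hunit d]
          exact Finset.sum_congr rfl fun i _ => (sq (A i d)).symm
        rw [this]; norm_num
      simp [hdd]
    -- off-diagonal sum bounded by card * M^2
    have hoff : ∑ p ∈ s, (colInner A p.1 p.2)^2 ≤ ((L:ℝ)*L - L) * M^2 := by
      have hcard : (s.card : ℝ) = (L:ℝ)*L - L := by
        rw [hs, Finset.offDiag_card]
        simp only [Finset.card_univ, Fintype.card_fin]
        have : L ≤ L * L := Nat.le_mul_of_pos_left L (by omega)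
        push_cast [Nat.cast_sub this]
        ring
      calc ∑ p ∈ s, (colInner A p.1 p.2)^2 ≤ ∑ _p ∈ s, M^2 := by
            refine Finset.sum_le_sum fun p hp => ?_
            have h := Finset.le_sup' (f := fun p => |colInner A p.1 p.2|) hp
            calc (colInner A p.1 p.2)^2 = |colInner A p.1 p.2|^2 := (sq_abs _).symm
              _ ≤ M^2 := pow_le_pow_left₀ (abs_nonneg _) h 2
        _ = (s.card : ℝ) * M^2 := by rw [Finset.sum_const, nsmul_eq_mul]
        _ = ((L:ℝ)*L - L) * M^2 := by rw [hcard]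
    -- combine
    have hD' : (1:ℝ) ≤ (D:ℝ) := by exact_mod_cast hD
    have hL' : (2:ℝ) ≤ (L:ℝ) := by exact_mod_cast hL2
    have hbig : (L:ℝ)^2 ≤ D * ((L:ℝ) + ((L:ℝ)*L - L) * M^2) := by
      calc (L:ℝ)^2 ≤ D * ∑ i, (B i i)^2 := hCS
        _ ≤ D * ∑ i, ∑ k, (B i k)^2 := by
            apply mul_le_mul_of_nonneg_left hdiagB (by positivity)
        _ = D * (∑ d, ∑ e, (colInner A d e)^2) := by rw [key1]
        _ = D * ((L:ℝ) + ∑ p ∈ s, (colInner A p.1 p.2)^2) := by rw [hsplit]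
        _ ≤ D * ((L:ℝ) + ((L:ℝ)*L - L) * M^2) := by
            apply mul_le_mul_of_nonneg_left _ (by positivity)
            linarith [hoff]
    clear_value M B
    clear hM hB
    have hrM : ((L : ℝ) - D) / (D * ((L : ℝ) - 1)) ≤ M^2 := by
      rw [div_le_iff₀ (by nlinarith)]
      nlinarith [hbig, hM0, sq_nonneg M, mul_nonneg (mul_nonneg hM0 hM0) (by linarith : (0:ℝ) ≤ (D:ℝ))]
    calc Real.sqrt (((L : ℝ) - D) / (D * ((L : ℝ) - 1)))
        ≤ Real.sqrt (M^2) := Real.sqrt_le_sqrt hrM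
      _ = M := Real.sqrt_sq hM0
      _ ≤ selfCoherence A := hMsup
end

section
/- An equiangular set of L unit vectors in ℝ^D (all pairwise absolute inner products equal to some c with 0 < c < 1) satisfies L ≤ D(D+1)/2. -/
/-!
The rank-one matrices `vᵢ vᵢᵀ`, viewed as vectors with the Frobenius inner product, satisfy
`⟪vᵢ vᵢᵀ, vⱼ vⱼᵀ⟫ = ⟪vᵢ, vⱼ⟫²`, so their Gram matrix is `(1 - c²) I + c² J`, which is positive
definite. Hence they are linearly independent, and being symmetric they live in a space of
dimension `D(D+1)/2`, the number of unordered pairs of coordinates.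
-/

open Matrix

namespace Equiangular

variable {ι n : Type*} [Fintype ι]

theorem posDef_of_diag_eq_one_of_offDiag_eq [DecidableEq ι] {A : Matrix ι ι ℝ} {t : ℝ}
    (ht0 : 0 ≤ t) (ht1 : t < 1) (hdiag : ∀ i, A i i = 1) (hoff : ∀ i j, i ≠ j → A i j = t) :
    A.PosDef := by
  have hA : A = (1 - t) • (1 : Matrix ι ι ℝ) + t • vecMulVec 1 1 := by
    ext i j
    by_cases hij : i = j
    · subst hij; simp [hdiag]
    · simp [hoff i j hij, hij]
  rw [hA]
  exact (PosDef.one.smul (sub_pos.mpr ht1)).add_posSemidef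
    ((posSemidef_vecMulVec_self_star 1).smul ht0)

/-- The rank-one matrix `x xᵀ`, flattened into a vector so that the inner product it carries
is the Frobenius one. -/
noncomputable def outerSelf (x : EuclideanSpace ℝ n) : EuclideanSpace ℝ (n × n) :=
  WithLp.toLp 2 fun p => x p.1 * x p.2

theorem inner_outerSelf [Fintype n] (x y : EuclideanSpace ℝ n) :
    inner ℝ (outerSelf x) (outerSelf y) = inner ℝ x y ^ 2 := by
  simp only [outerSelf, PiLp.inner_apply, RCLike.inner_apply, conj_trivial,
    Fintype.sum_prod_type, sq, Finset.sum_mul_sum]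
  refine Finset.sum_congr rfl fun a _ => Finset.sum_congr rfl fun b _ => ?_
  ring

def sym2OuterSelf (x : EuclideanSpace ℝ n) : Sym2 n → ℝ :=
  Sym2.lift ⟨fun a b => x a * x b, fun _ _ => mul_comm _ _⟩

noncomputable def unsymmetrize : (Sym2 n → ℝ) →ₗ[ℝ] EuclideanSpace ℝ (n × n) :=
  (WithLp.linearEquiv 2 ℝ (n × n → ℝ)).symm.toLinearMap ∘ₗ
    LinearMap.funLeft ℝ ℝ fun p : n × n => s(p.1, p.2)

theorem unsymmetrize_sym2OuterSelf (x : EuclideanSpace ℝ n) :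
    unsymmetrize (sym2OuterSelf x) = outerSelf x :=
  rfl

theorem linearIndependent_outerSelf [Fintype n] [DecidableEq ι] {v : ι → EuclideanSpace ℝ n}
    {c : ℝ} (hc0 : 0 ≤ c) (hc1 : c < 1) (hunit : ∀ i, ‖v i‖ = 1)
    (heq : ∀ i j, i ≠ j → |(inner ℝ (v i) (v j) : ℝ)| = c) :
    LinearIndependent ℝ fun i => outerSelf (v i) := by
  refine linearIndependent_of_posDef_gram (𝕜 := ℝ) <|
    posDef_of_diag_eq_one_of_offDiag_eq (sq_nonneg c) (pow_lt_one₀ hc0 hc1 two_ne_zero)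
      (fun i => ?_) fun i j hij => ?_
  · rw [gram_apply, inner_outerSelf, real_inner_self_eq_norm_sq, hunit, one_pow, one_pow]
  · rw [gram_apply, inner_outerSelf, ← sq_abs, heq i j hij]

theorem card_le_choose_of_equiangular [Fintype n] {v : ι → EuclideanSpace ℝ n} {c : ℝ}
    (hc0 : 0 ≤ c) (hc1 : c < 1) (hunit : ∀ i, ‖v i‖ = 1)
    (heq : ∀ i j, i ≠ j → |(inner ℝ (v i) (v j) : ℝ)| = c) :
    Fintype.card ι ≤ (Fintype.card n + 1).choose 2 := by
  classical
  have hli : LinearIndependent ℝ fun i => sym2OuterSelf (v i) :=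
    .of_comp unsymmetrize <| by
      simpa only [Function.comp_def, unsymmetrize_sym2OuterSelf] using
        linearIndependent_outerSelf hc0 hc1 hunit heq
  simpa [Sym2.card] using hli.fintype_card_le_finrank

end Equiangular

/-- An equiangular set of `L` unit vectors in `ℝ^D` (pairwise absolute inner products all
equal to some `c` with `0 < c < 1`) has at most `D(D+1)/2` elements. -/
theorem equiangular_lines_bound (D L : ℕ) (v : Fin L → EuclideanSpace ℝ (Fin D)) (c : ℝ)
    (hc0 : 0 < c) (hc1 : c < 1)
    (hunit : ∀ i, ‖v i‖ = 1)
    (heq : ∀ i j, i ≠ j → |(inner ℝ (v i) (v j) : ℝ)| = c) :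
    L ≤ D * (D + 1) / 2 := by
  simpa [Nat.choose_two_right, Nat.mul_comm] using
    Equiangular.card_le_choose_of_equiangular hc0.le hc1 hunit heq
end

section
/- Suppose a vector x ∈ ℝ^D admits an exact representation x = D c̃ where c̃ has support S with |S| = k, the columns of D are unit-norm, and k < (1/2)(1 + 1/μ(D)) with μ(D) > 0. Then the submatrix D_S of columns indexed by S has linearly independent columns. -/
open Matrix

/-- If `x = A c` with `c` supported on `S`, `|S| = k`, and `k < (1 + 1/μ(A))/2` with
`μ(A) > 0`, then the columns of `A` indexed by `S` are linearly independent. -/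
theorem erc_implies_linearIndependent (D L k : ℕ)
    (A : Matrix (Fin D) (Fin L) ℝ)
    (hunit : ∀ j : Fin L, ∑ i, (A i j) ^ 2 = 1)
    (hμpos : 0 < selfCoherence A)
    (x : Fin D → ℝ) (c : Fin L → ℝ) (S : Finset (Fin L))
    (hx : x = A.mulVec c)
    (hsupp : ∀ l : Fin L, c l ≠ 0 ↔ l ∈ S)
    (hcard : S.card = k)
    (hk : (k : ℝ) < (1 + 1 / selfCoherence A) / 2) :
    LinearIndependent ℝ (fun s : S => fun i => A i (s : Fin L)) := by
  classical
  set μ := selfCoherence A with hμdef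
  have hbdd : BddAbove {x | ∃ d e : Fin L, d ≠ e ∧ x = |colInner A d e|} := by
    apply Set.Finite.bddAbove
    apply Set.Finite.subset (Set.finite_range (fun p : Fin L × Fin L => |colInner A p.1 p.2|))
    rintro y ⟨d, e, _, rfl⟩
    exact ⟨(d, e), rfl⟩
  have hμle : ∀ d e : Fin L, d ≠ e → |colInner A d e| ≤ μ := fun d e hde =>
    le_csSup hbdd ⟨d, e, hde, rfl⟩
  rw [Fintype.linearIndependent_iff]
  intro g hg
  by_contra hne
  push_neg at hne
  obtain ⟨s1, hs1⟩ := hne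
  have hnonempty : Nonempty {l // l ∈ S} := ⟨s1⟩
  obtain ⟨s0, hs0⟩ := Finite.exists_max (fun s : S => |g s|)
  have hgs0 : 0 < |g s0| := lt_of_lt_of_le (abs_pos.mpr hs1) (hs0 s1)
  have hsum : ∀ i, ∑ s : S, g s * A i (s : Fin L) = 0 := by
    intro i
    have h := congrFun hg i
    simpa [Finset.sum_apply] using h
  have key : ∑ s : S, g s * colInner A (s : Fin L) (s0 : Fin L) = 0 := by
    have h2 : ∀ i : Fin D, ∑ s : S, g s * (A i (s : Fin L) * A i (s0 : Fin L)) = 0 := by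
      intro i
      have h3 : (∑ s : S, g s * A i (s : Fin L)) * A i (s0 : Fin L) = 0 := by
        rw [hsum i, zero_mul]
      rw [← h3, Finset.sum_mul]
      exact Finset.sum_congr rfl fun s _ => by ring
    calc ∑ s : S, g s * colInner A (s : Fin L) (s0 : Fin L)
        = ∑ s : S, ∑ i, g s * (A i (s : Fin L) * A i (s0 : Fin L)) :=
          Finset.sum_congr rfl fun s _ => by rw [colInner, Finset.mul_sum]
      _ = ∑ i, ∑ s : S, g s * (A i (s : Fin L) * A i (s0 : Fin L)) := Finset.sum_comm
      _ = 0 := Finset.sum_eq_zero fun i _ => h2 i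
  have hdiag : colInner A (s0 : Fin L) (s0 : Fin L) = 1 := by
    rw [colInner, ← hunit (s0 : Fin L)]
    exact Finset.sum_congr rfl fun i _ => by ring
  have hsplit : g s0 = - ∑ s ∈ Finset.univ.erase s0, g s * colInner A (s : Fin L) (s0 : Fin L) := by
    have h4 := Finset.add_sum_erase Finset.univ
      (fun s : S => g s * colInner A (s : Fin L) (s0 : Fin L)) (Finset.mem_univ s0)
    rw [key] at h4
    simp only [hdiag, mul_one] at h4
    linarith
  have hcardS : Fintype.card {l // l ∈ S} = k := by
    rw [Fintype.card_coe, hcard]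
  have hk1 : 1 ≤ k := by
    have := Fintype.card_pos_iff.mpr hnonempty
    omega
  have hcarde : ((Finset.univ.erase s0).card : ℝ) = (k : ℝ) - 1 := by
    rw [Finset.card_erase_of_mem (Finset.mem_univ s0), Finset.card_univ, hcardS]
    push_cast [Nat.cast_sub hk1]
    ring
  have hbound : |g s0| ≤ ((k : ℝ) - 1) * (|g s0| * μ) := by
    calc |g s0| = |∑ s ∈ Finset.univ.erase s0, g s * colInner A (s : Fin L) (s0 : Fin L)| := by
          rw [hsplit, abs_neg]
      _ ≤ ∑ s ∈ Finset.univ.erase s0, |g s * colInner A (s : Fin L) (s0 : Fin L)| :=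
          Finset.abs_sum_le_sum_abs _ _
      _ ≤ ∑ s ∈ Finset.univ.erase s0, |g s0| * μ := by
          apply Finset.sum_le_sum
          intro s hs
          rw [abs_mul]
          have hne' : (s : Fin L) ≠ (s0 : Fin L) := fun h =>
            (Finset.mem_erase.mp hs).1 (Subtype.ext h)
          exact mul_le_mul (hs0 s) (hμle _ _ hne') (abs_nonneg _) (abs_nonneg _)
      _ = ((k : ℝ) - 1) * (|g s0| * μ) := by
          rw [Finset.sum_const, nsmul_eq_mul, hcarde]
  have h4 : 2 * (k : ℝ) - 1 < 1 / μ := by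
    have := hk
    linarith
  have h5 : (2 * (k : ℝ) - 1) * μ < 1 := by
    have h6 := mul_lt_mul_of_pos_right h4 hμpos
    rw [one_div, inv_mul_cancel₀ (ne_of_gt hμpos)] at h6
    exact h6
  have hk1' : (1 : ℝ) ≤ (k : ℝ) := by exact_mod_cast hk1
  nlinarith [hbound, hgs0, h5, hμpos.le]
end
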